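/- Let p be a real polynomial and α a root of even multiplicity d ≥ 2. Set λ_d = p^(d)(α)/d! and λ_{d+1} = p^(d+1)(α)/(d+1)!. For a curve γ_κ(t) = (α + t + t²/2, α - t + κt²/2) with curvature parameter κ ≠ -1 - 4λ_{d+1}/(d·λ_d), the limit as t → 0 of N(γ_κ(t))/D(γ_κ(t)) equals y_κ = α - λ_d / ( (d·λ_d/4)(κ+1) + λ_{d+1} ), and the map κ ↦ y_κ is injective on its domain. -/

import Mathlib

open Filter

/-- The divided difference polynomial `q(x,y)`, denominator `D` of the secant map. -/
noncomputable def secQ (p : Polynomial ℝ) (x y : ℝ) : ℝ :=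
  ∑ m ∈ Finset.Icc 1 p.natDegree,
    p.coeff m * ∑ ℓ ∈ Finset.range m, x ^ (m - 1 - ℓ) * y ^ ℓ

/-- The numerator `N(x,y) = y D(x,y) - p(y)` of the second component of the secant map. -/
noncomputable def secN (p : Polynomial ℝ) (x y : ℝ) : ℝ :=
  y * secQ p x y - p.eval y

/-- The Taylor coefficient `λ_j = p^(j)(α)/j!`. -/
noncomputable def lamCoeff (p : Polynomial ℝ) (α : ℝ) (j : ℕ) : ℝ :=
  iteratedDeriv j (fun t => p.eval t) α / (Nat.factorial j)

open Polynomial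

lemma iteratedDeriv_polyEval (p : Polynomial ℝ) (j : ℕ) :
    iteratedDeriv j (fun t => p.eval t) = fun t => (Polynomial.derivative^[j] p).eval t := by
  induction j with
  | zero => simp
  | succ n ih =>
    rw [iteratedDeriv_succ, ih]
    funext x
    rw [Function.iterate_succ_apply']
    exact Polynomial.deriv _

lemma lamCoeff_eq_taylorCoeff (p : Polynomial ℝ) (α : ℝ) (j : ℕ) :
    lamCoeff p α j = (Polynomial.taylor α p).coeff j := by
  rw [lamCoeff, iteratedDeriv_polyEval, taylor_coeff]
  have h := congrFun (Polynomial.factorial_smul_hasseDeriv (R := ℝ) j) p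
  simp only [Pi.smul_apply, LinearMap.smul_apply] at h
  rw [← h]
  have hj : (j.factorial : ℝ) ≠ 0 := Nat.cast_ne_zero.mpr (Nat.factorial_ne_zero j)
  simp only [nsmul_eq_mul, eval_mul, eval_natCast]
  field_simp

lemma secQ_mul (p : Polynomial ℝ) (x y : ℝ) :
    (x - y) * secQ p x y = p.eval x - p.eval y := by
  have hinner : ∀ m : ℕ, (∑ ℓ ∈ Finset.range m, x ^ (m - 1 - ℓ) * y ^ ℓ) * (x - y)
      = x ^ m - y ^ m := by
    intro m
    rw [← geom_sum₂_mul x y m]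
    congr 1
    rw [← Finset.sum_range_reflect]
    apply Finset.sum_congr rfl
    intro ℓ hℓ
    rw [Finset.mem_range] at hℓ
    congr 2
    omega
  rw [secQ, mul_comm, Finset.sum_mul]
  have h1 : ∀ m ∈ Finset.Icc 1 p.natDegree,
      p.coeff m * (∑ ℓ ∈ Finset.range m, x ^ (m - 1 - ℓ) * y ^ ℓ) * (x - y)
        = p.coeff m * (x ^ m - y ^ m) := by
    intro m _; rw [mul_assoc, hinner]
  rw [Finset.sum_congr rfl h1]
  have hx := Polynomial.eval_eq_sum_range (x := x) (p := p)
  have hy := Polynomial.eval_eq_sum_range (x := y) (p := p)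
  rw [hx, hy, ← Finset.sum_sub_distrib]
  have h2 : ∀ i ∈ Finset.range (p.natDegree + 1), i ∉ Finset.Icc 1 p.natDegree →
      p.coeff i * x ^ i - p.coeff i * y ^ i = 0 := by
    intro i hi hni
    rw [Finset.mem_range] at hi; rw [Finset.mem_Icc] at hni
    have : i = 0 := by omega
    simp [this]
  rw [← Finset.sum_subset (fun i hi => by rw [Finset.mem_Icc] at hi; rw [Finset.mem_range]; omega) h2]
  apply Finset.sum_congr rfl
  intro m _; ring


/-- Let `α` be a root of `p` of even multiplicity `d ≥ 2`, `λ_d = p^(d)(α)/d!`,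
`λ_{d+1} = p^(d+1)(α)/(d+1)!`. Along the curve
`γ_κ(t) = (α + t + t²/2, α - t + κ t²/2)` with `κ ≠ -1 - 4λ_{d+1}/(d λ_d)`,
`N(γ_κ(t))/D(γ_κ(t)) → y_κ = α - λ_d / ((d λ_d/4)(κ+1) + λ_{d+1})` as `t → 0`,
and `κ ↦ y_κ` is injective on its domain. -/
theorem secant_focal_even_multiplicity (p : Polynomial ℝ) (α : ℝ) (d : ℕ)
    (hd2 : 2 ≤ d) (heven : Even d)
    (hroot : ∀ j : ℕ, j < d → iteratedDeriv j (fun t => p.eval t) α = 0)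
    (hd0 : iteratedDeriv d (fun t => p.eval t) α ≠ 0) :
    (∀ κ : ℝ, κ ≠ -1 - 4 * lamCoeff p α (d + 1) / (d * lamCoeff p α d) →
      Tendsto (fun t : ℝ =>
          secN p (α + t + t ^ 2 / 2) (α - t + κ * t ^ 2 / 2) /
            secQ p (α + t + t ^ 2 / 2) (α - t + κ * t ^ 2 / 2))
        (nhdsWithin 0 {(0 : ℝ)}ᶜ)
        (nhds (α - lamCoeff p α d /
          (d * lamCoeff p α d / 4 * (κ + 1) + lamCoeff p α (d + 1))))) ∧
    (∀ κ₁ κ₂ : ℝ,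
      κ₁ ≠ -1 - 4 * lamCoeff p α (d + 1) / (d * lamCoeff p α d) →
      κ₂ ≠ -1 - 4 * lamCoeff p α (d + 1) / (d * lamCoeff p α d) →
      α - lamCoeff p α d / (d * lamCoeff p α d / 4 * (κ₁ + 1) + lamCoeff p α (d + 1)) =
        α - lamCoeff p α d / (d * lamCoeff p α d / 4 * (κ₂ + 1) + lamCoeff p α (d + 1)) →
      κ₁ = κ₂) := by
  -- basic notation
  set c : ℕ → ℝ := fun j => (Polynomial.taylor α p).coeff j with hc_def
  have hc : ∀ j, lamCoeff p α j = c j := fun j => lamCoeff_eq_taylorCoeff p α j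
  have hlam_ne : lamCoeff p α d ≠ 0 := by
    rw [lamCoeff]
    exact div_ne_zero hd0 (Nat.cast_ne_zero.mpr (Nat.factorial_ne_zero d))
  have hcd : c d ≠ 0 := by rw [← hc]; exact hlam_ne
  have hczero : ∀ j, j < d → c j = 0 := by
    intro j hj
    have := hroot j hj
    rw [← hc, lamCoeff, this, zero_div]
  have hdR : (d : ℝ) ≠ 0 := Nat.cast_ne_zero.mpr (by omega)
  -- nonvanishing of the focal denominator
  have hC : ∀ κ : ℝ, κ ≠ -1 - 4 * lamCoeff p α (d + 1) / (d * lamCoeff p α d) →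
      (d : ℝ) * c d / 4 * (κ + 1) + c (d + 1) ≠ 0 := by
    intro κ hκ h0
    apply hκ
    rw [hc, hc]
    have h1 : 4 * c (d + 1) / ((d : ℝ) * c d) = -(κ + 1) := by
      rw [div_eq_iff (mul_ne_zero hdR hcd)]
      linear_combination (4 : ℝ) * h0
    rw [h1]
    ring
  -- injectivity part
  have hinj : ∀ κ₁ κ₂ : ℝ,
      κ₁ ≠ -1 - 4 * lamCoeff p α (d + 1) / (d * lamCoeff p α d) →
      κ₂ ≠ -1 - 4 * lamCoeff p α (d + 1) / (d * lamCoeff p α d) →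
      α - lamCoeff p α d / (d * lamCoeff p α d / 4 * (κ₁ + 1) + lamCoeff p α (d + 1)) =
        α - lamCoeff p α d / (d * lamCoeff p α d / 4 * (κ₂ + 1) + lamCoeff p α (d + 1)) →
      κ₁ = κ₂ := by
    intro κ₁ κ₂ h1 h2 heq
    have hC1 := hC κ₁ h1
    have hC2 := hC κ₂ h2
    rw [hc, hc] at heq
    have heq2 : c d / ((d : ℝ) * c d / 4 * (κ₁ + 1) + c (d + 1)) =
        c d / ((d : ℝ) * c d / 4 * (κ₂ + 1) + c (d + 1)) := by linarith
    rw [div_eq_div_iff hC1 hC2] at heq2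
    have heq3 : (d : ℝ) * c d / 4 * (κ₂ + 1) + c (d + 1) =
        (d : ℝ) * c d / 4 * (κ₁ + 1) + c (d + 1) := mul_left_cancel₀ hcd heq2
    have hne4 : (d : ℝ) * c d / 4 ≠ 0 := div_ne_zero (mul_ne_zero hdR hcd) (by norm_num)
    have : (d : ℝ) * c d / 4 * (κ₂ + 1) = (d : ℝ) * c d / 4 * (κ₁ + 1) := by linarith
    have := mul_left_cancel₀ hne4 this
    linarith
  refine ⟨?_, hinj⟩
  intro κ hκ
  simp only [hc]
  have hCk : (d : ℝ) * c d / 4 * (κ + 1) + c (d + 1) ≠ 0 := hC κ hκ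
  set N : ℕ := max p.natDegree (d + 1) with hN_def
  have hdN : d ≤ N := le_trans (by omega) (le_max_right _ _)
  have hd1N : d + 1 ≤ N := le_max_right _ _
  have heval : ∀ z : ℝ, p.eval z = ∑ j ∈ Finset.range (N + 1), c j * (z - α) ^ j := by
    intro z
    have h1 : p.eval z = (Polynomial.taylor α p).eval (z - α) :=
      (Polynomial.taylor_eval_sub α p z).symm
    have hlt : (Polynomial.taylor α p).natDegree < N + 1 := by
      rw [natDegree_taylor]
      have := le_max_left p.natDegree (d + 1)
      omega
    rw [h1, Polynomial.eval_eq_sum_range' hlt (z - α)]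
  have hsub : Finset.Icc d N ⊆ Finset.range (N + 1) := by
    intro j hj; rw [Finset.mem_Icc] at hj; rw [Finset.mem_range]; omega
  have hyfac : ∀ t : ℝ, α - t + κ * t ^ 2 / 2 - α = t * (-1 + κ * t / 2) := by intro t; ring
  have hxfac : ∀ t : ℝ, α + t + t ^ 2 / 2 - α = t * (1 + t / 2) := by intro t; ring
  have hxyfac : ∀ t : ℝ, (α + t + t ^ 2 / 2) - (α - t + κ * t ^ 2 / 2)
      = t * (2 + (1 - κ) * t / 2) := by intro t; ring
  -- the function g with p(y(t)) = t^d g(t)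
  set g : ℝ → ℝ := fun t => ∑ j ∈ Finset.Icc d N,
      c j * t ^ (j - d) * (-1 + κ * t / 2) ^ j with hg_def
  have hgid : ∀ t : ℝ, p.eval (α - t + κ * t ^ 2 / 2) = t ^ d * g t := by
    intro t
    rw [heval]
    have step1 : ∑ j ∈ Finset.range (N + 1), c j * (α - t + κ * t ^ 2 / 2 - α) ^ j
        = ∑ j ∈ Finset.Icc d N, c j * (α - t + κ * t ^ 2 / 2 - α) ^ j := by
      refine (Finset.sum_subset hsub ?_).symm
      intro j hj hnj
      rw [Finset.mem_range] at hj; rw [Finset.mem_Icc] at hnj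
      rw [hczero j (by omega), zero_mul]
    rw [step1, hg_def, Finset.mul_sum]
    apply Finset.sum_congr rfl
    intro j hj
    rw [Finset.mem_Icc] at hj
    have hpow : t ^ j = t ^ d * t ^ (j - d) := by
      rw [← pow_add]; congr 1; omega
    rw [hyfac, mul_pow, hpow]; ring
  have hgcont : Continuous g := by
    rw [hg_def]
    apply continuous_finset_sum
    intro j _
    fun_prop
  have hg0 : g 0 = c d := by
    simp only [hg_def]
    rw [Finset.sum_eq_single_of_mem d (Finset.mem_Icc.mpr ⟨le_refl d, hdN⟩)]
    · have h1 : (-1 + κ * (0:ℝ) / 2) = -1 := by ring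
      rw [Nat.sub_self, pow_zero, h1, heven.neg_one_pow]; ring
    · intro j hj hjd
      rw [Finset.mem_Icc] at hj
      rw [zero_pow (by omega : j - d ≠ 0)]; ring
  have hL1 : Tendsto (fun t : ℝ => p.eval (α - t + κ * t ^ 2 / 2) / t ^ d)
      (nhdsWithin 0 {(0:ℝ)}ᶜ) (nhds (c d)) := by
    have h1 : Tendsto g (nhdsWithin 0 {(0:ℝ)}ᶜ) (nhds (c d)) := by
      rw [← hg0]
      exact (hgcont.tendsto 0).mono_left nhdsWithin_le_nhds
    apply h1.congr'
    filter_upwards [self_mem_nhdsWithin] with t ht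
    have ht' : (t : ℝ) ≠ 0 := ht
    rw [hgid t, mul_comm, mul_div_assoc, div_self (pow_ne_zero d ht'), mul_one]
  -- the derivative computation for the j = d term
  set f0 : ℝ → ℝ := fun t => (1 + t / 2) ^ d - (-1 + κ * t / 2) ^ d with hf0_def
  have hodd : Odd (d - 1) := Nat.Even.sub_odd (by omega) heven odd_one
  have hf00 : f0 0 = 0 := by
    rw [hf0_def]
    have h1 : (1 + (0:ℝ) / 2) = 1 := by ring
    have h2 : (-1 + κ * (0:ℝ) / 2) = -1 := by ring
    simp only [h1, h2, one_pow, heven.neg_one_pow]; ring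
  have hf0d : HasDerivAt f0 ((d : ℝ) * (1 + κ) / 2) 0 := by
    have hu : HasDerivAt (fun t : ℝ => 1 + t / 2) (1 / 2) 0 := by
      simpa using ((hasDerivAt_id (0:ℝ)).div_const 2).const_add 1
    have hv : HasDerivAt (fun t : ℝ => -1 + κ * t / 2) (κ * 1 / 2) 0 := by
      simpa using (((hasDerivAt_id (0:ℝ)).const_mul κ).div_const 2).const_add (-1)
    have h1 := hu.pow d
    have h2 := hv.pow d
    have h3 := h1.sub h2
    rw [hf0_def]
    refine h3.congr_deriv ?_
    have e1 : (1 + (0:ℝ) / 2) = 1 := by ring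
    have e2 : (-1 + κ * (0:ℝ) / 2) = -1 := by ring
    rw [e1, e2, one_pow, hodd.neg_one_pow]
    ring
  have hslope : Tendsto (fun t : ℝ => f0 t / t) (nhdsWithin 0 {(0:ℝ)}ᶜ)
      (nhds ((d : ℝ) * (1 + κ) / 2)) := by
    have h1 := hasDerivAt_iff_tendsto_slope.mp hf0d
    apply h1.congr'
    filter_upwards [self_mem_nhdsWithin] with t ht
    rw [slope_def_field, hf00, sub_zero, sub_zero]
  -- the function g2 collecting the j ≥ d+1 terms
  set g2 : ℝ → ℝ := fun t => ∑ j ∈ Finset.Icc (d + 1) N,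
      c j * t ^ (j - (d + 1)) * ((1 + t / 2) ^ j - (-1 + κ * t / 2) ^ j) with hg2_def
  have hg2cont : Continuous g2 := by
    rw [hg2_def]
    apply continuous_finset_sum
    intro j _
    fun_prop
  have hg20 : g2 0 = 2 * c (d + 1) := by
    simp only [hg2_def]
    rw [Finset.sum_eq_single_of_mem (d + 1) (Finset.mem_Icc.mpr ⟨le_refl _, hd1N⟩)]
    · have h1 : (1 + (0:ℝ) / 2) = 1 := by ring
      have h2 : (-1 + κ * (0:ℝ) / 2) = -1 := by ring
      have hodd1 : Odd (d + 1) := Even.add_one heven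
      rw [Nat.sub_self, pow_zero, h1, h2, one_pow, hodd1.neg_one_pow]
      ring
    · intro j hj hjne
      rw [Finset.mem_Icc] at hj
      rw [zero_pow (by omega : j - (d + 1) ≠ 0)]; ring
  have hIccsplit : Finset.Icc d N = insert d (Finset.Icc (d + 1) N) := by
    ext j
    simp only [Finset.mem_Icc, Finset.mem_insert]
    omega
  have hPhi : ∀ t : ℝ, t ≠ 0 →
      (p.eval (α + t + t ^ 2 / 2) - p.eval (α - t + κ * t ^ 2 / 2)) / t ^ (d + 1)
        = c d * (f0 t / t) + g2 t := by
    intro t ht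
    have hnum : p.eval (α + t + t ^ 2 / 2) - p.eval (α - t + κ * t ^ 2 / 2)
        = t ^ (d + 1) * (c d * (f0 t / t) + g2 t) := by
      rw [heval, heval, ← Finset.sum_sub_distrib]
      have step1 : ∑ j ∈ Finset.range (N + 1),
          (c j * (α + t + t ^ 2 / 2 - α) ^ j - c j * (α - t + κ * t ^ 2 / 2 - α) ^ j)
          = ∑ j ∈ Finset.Icc d N,
          (c j * (α + t + t ^ 2 / 2 - α) ^ j - c j * (α - t + κ * t ^ 2 / 2 - α) ^ j) := by
        refine (Finset.sum_subset hsub ?_).symm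
        intro j hj hnj
        rw [Finset.mem_range] at hj; rw [Finset.mem_Icc] at hnj
        rw [hczero j (by omega)]; ring
      rw [step1, hIccsplit, Finset.sum_insert (by simp [Finset.mem_Icc])]
      rw [mul_add]
      congr 1
      · rw [hxfac, hyfac, mul_pow, mul_pow, hf0_def]
        field_simp
        ring
      · rw [hg2_def, Finset.mul_sum]
        apply Finset.sum_congr rfl
        intro j hj
        rw [Finset.mem_Icc] at hj
        have hpow : t ^ j = t ^ (d + 1) * t ^ (j - (d + 1)) := by
          rw [← pow_add]; congr 1; omega
        rw [hxfac, hyfac, mul_pow, mul_pow, hpow]; ring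
    rw [hnum, mul_div_cancel_left₀ _ (pow_ne_zero _ ht)]
  have hDlim : Tendsto (fun t : ℝ => c d * (f0 t / t) + g2 t) (nhdsWithin 0 {(0:ℝ)}ᶜ)
      (nhds (c d * ((d : ℝ) * (1 + κ) / 2) + 2 * c (d + 1))) := by
    refine (hslope.const_mul (c d)).add ?_
    rw [← hg20]
    exact (hg2cont.tendsto 0).mono_left nhdsWithin_le_nhds
  have hwt : Tendsto (fun t : ℝ => 2 + (1 - κ) * t / 2) (nhdsWithin 0 {(0:ℝ)}ᶜ)
      (nhds 2) := by
    have hco : Continuous fun t : ℝ => 2 + (1 - κ) * t / 2 := by fun_prop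
    have h := (hco.tendsto 0).mono_left (nhdsWithin_le_nhds (s := {(0:ℝ)}ᶜ))
    simpa using h
  have hwne : ∀ᶠ t in nhdsWithin 0 {(0:ℝ)}ᶜ, 2 + (1 - κ) * t / 2 ≠ 0 :=
    hwt.eventually_ne two_ne_zero
  have hL2 : Tendsto (fun t : ℝ =>
      secQ p (α + t + t ^ 2 / 2) (α - t + κ * t ^ 2 / 2) / t ^ d)
      (nhdsWithin 0 {(0:ℝ)}ᶜ) (nhds ((d : ℝ) * c d / 4 * (κ + 1) + c (d + 1))) := by
    have h1 := hDlim.div hwt two_ne_zero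
    have h2 : (c d * ((d : ℝ) * (1 + κ) / 2) + 2 * c (d + 1)) / 2
        = (d : ℝ) * c d / 4 * (κ + 1) + c (d + 1) := by ring
    rw [h2] at h1
    apply h1.congr'
    filter_upwards [hwne, self_mem_nhdsWithin] with t hw ht
    have ht' : (t : ℝ) ≠ 0 := ht
    have hq : secQ p (α + t + t ^ 2 / 2) (α - t + κ * t ^ 2 / 2)
        = (p.eval (α + t + t ^ 2 / 2) - p.eval (α - t + κ * t ^ 2 / 2))
          / (t * (2 + (1 - κ) * t / 2)) := by
      rw [eq_div_iff (mul_ne_zero ht' hw), mul_comm, ← hxyfac t, secQ_mul]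
    simp only [Pi.div_apply]
    rw [← hPhi t ht', hq, div_div, div_div]
    congr 1
    ring
  have hq_ne : ∀ᶠ t in nhdsWithin 0 {(0:ℝ)}ᶜ,
      secQ p (α + t + t ^ 2 / 2) (α - t + κ * t ^ 2 / 2) ≠ 0 := by
    filter_upwards [hL2.eventually_ne hCk] with t h1
    intro h0
    apply h1
    rw [h0, zero_div]
  have hylim : Tendsto (fun t : ℝ => α - t + κ * t ^ 2 / 2)
      (nhdsWithin 0 {(0:ℝ)}ᶜ) (nhds α) := by
    have hco : Continuous fun t : ℝ => α - t + κ * t ^ 2 / 2 := by fun_prop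
    have h : Tendsto (fun t : ℝ => α - t + κ * t ^ 2 / 2) (nhdsWithin 0 {(0:ℝ)}ᶜ)
        (nhds (α - 0 + κ * (0:ℝ) ^ 2 / 2)) :=
      (hco.tendsto 0).mono_left (nhdsWithin_le_nhds (s := {(0:ℝ)}ᶜ))
    have hval : α - 0 + κ * (0:ℝ) ^ 2 / 2 = α := by ring
    rwa [hval] at h
  have hdiv : Tendsto (fun t : ℝ => p.eval (α - t + κ * t ^ 2 / 2) /
      secQ p (α + t + t ^ 2 / 2) (α - t + κ * t ^ 2 / 2))
      (nhdsWithin 0 {(0:ℝ)}ᶜ)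
      (nhds (c d / ((d : ℝ) * c d / 4 * (κ + 1) + c (d + 1)))) := by
    have h := hL1.div hL2 hCk
    apply h.congr'
    filter_upwards [hq_ne, self_mem_nhdsWithin] with t hqt ht
    have ht' : (t : ℝ) ≠ 0 := ht
    have htd : (t : ℝ) ^ d ≠ 0 := pow_ne_zero d ht'
    simp only [Pi.div_apply]
    rw [div_div_div_comm, div_self htd, div_one]
  have hfin := hylim.sub hdiv
  apply hfin.congr'
  filter_upwards [hq_ne] with t hqt
  rw [secN, eq_div_iff hqt, sub_mul, div_mul_cancel₀ _ hqt]
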